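/- arXiv:2506.02855 — 3 statements merged into one kernel-verified Lean document; each statement's English description precedes it below -/
import Mathlib

section
/- Let μ be a growth rate and suppose x' = A(t)x admits a nonuniform μ-dichotomy with projections π(t) and constants D, λ_s, λ_u, ν, ω. Define V_s(t,x_s) = sup_{κ ≥ t} ‖Ψ(κ,t)x_s‖ (μ(κ)/μ(t))^{−λ_s}, V_u(t,x_u) = sup_{κ ≤ t} ‖Ψ(κ,t)x_u‖ (μ(κ)/μ(t))^{−λ_u}, and V(t,x) = −V_s(t, π(t)x) + V_u(t, (id − π(t))x). Then: (i) |V(t,x)| ≤ 2D max{μ(t)^{sign(t)ν}, μ(t)^{sign(t)ω}} ‖x‖ for all t, x; (ii) V(t, Ψ(t,τ)x) ≥ V(τ,x) for all t ≥ τ and all x; (iii) if x ∈ ℰ_τ^u then V(t, Ψ(t,τ)x) ≥ (μ(t)/μ(τ))^{λ_u} V(τ,x) for all t ≥ τ; (iv) if x ∈ ℰ_τ^s then |V(t, Ψ(t,τ)x)| ≤ (μ(t)/μ(τ))^{λ_s} |V(τ,x)| for all t ≥ τ; (v) setting C_u(τ) = min{(μ(τ−1)/μ(τ))^{λ_s}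 − 1, 1 − (μ(τ−1)/μ(τ))^{λ_u}} and C_s(τ) = min{1 − (μ(τ+1)/μ(τ))^{λ_s}, (μ(τ+1)/μ(τ))^{λ_u} − 1}, both positive, one has V(τ,x) ≥ C_u(τ) ‖x‖ for x ∈ ℰ_τ^u and |V(τ,x)| ≥ C_s(τ) ‖x‖ for x ∈ ℰ_τ^s. -/
open Filter MeasureTheory
open scoped Topology RealInnerProductSpace

noncomputable section

/-- Euclidean space `ℝⁿ`. -/
abbrev Euc (n : ℕ) := EuclideanSpace ℝ (Fin n)

/-- `μ` is a growth rate: strictly increasing, positive, `μ 0 = 1`,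
`μ(t) → +∞` as `t → +∞` and `μ(t) → 0` as `t → -∞`. -/
def IsGrowthRate (μ : ℝ → ℝ) : Prop :=
  StrictMono μ ∧ (∀ t, 0 < μ t) ∧ μ 0 = 1 ∧
    Filter.Tendsto μ Filter.atTop Filter.atTop ∧
    Filter.Tendsto μ Filter.atBot (nhds 0)

/-- `Ψ` is the evolution operator of the linear equation `x' = A(t) x`. -/
def IsEvolution {n : ℕ} (A : ℝ → Euc n →L[ℝ] Euc n) (Ψ : ℝ → ℝ → Euc n →L[ℝ] Euc n) : Prop :=
  (∀ s, Ψ s s = ContinuousLinearMap.id ℝ (Euc n)) ∧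
  (∀ t r s, (Ψ t r).comp (Ψ r s) = Ψ t s) ∧
  (∀ s x₀ t, HasDerivAt (fun r => Ψ r s x₀) (A t (Ψ t s x₀)) t)

/-- Nonuniform μ-dichotomy for the evolution operator `Ψ` with projections `π`
and constants `D, λs, λu, ν, ω`. -/
def HasMuDichotomy {n : ℕ} (μ : ℝ → ℝ) (Ψ : ℝ → ℝ → Euc n →L[ℝ] Euc n)
    (π : ℝ → Euc n →L[ℝ] Euc n) (D lams lamu ν ω : ℝ) : Prop :=
  (∀ t, (π t).comp (π t) = π t) ∧
  (∀ t s, (π t).comp (Ψ t s) = (Ψ t s).comp (π s)) ∧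
  1 ≤ D ∧ lams < 0 ∧ 0 < lamu ∧ 0 ≤ ν ∧ 0 ≤ ω ∧ lams + ν < 0 ∧ 0 < lamu - ω ∧
  (∀ t s, s ≤ t → ‖(Ψ t s).comp (π s)‖ ≤ D * (μ t / μ s) ^ lams * μ s ^ (Real.sign s * ν)) ∧
  (∀ t s, t ≤ s → ‖(Ψ t s).comp (1 - π s)‖ ≤ D * (μ t / μ s) ^ lamu * μ s ^ (Real.sign s * ω))

/-- Nonuniform μ-bounded growth for `Ψ` with constants `D, λmax, θ`. -/
def HasMuBoundedGrowth {n : ℕ} (μ : ℝ → ℝ) (Ψ : ℝ → ℝ → Euc n →L[ℝ] Euc n)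
    (D lamMax θ : ℝ) : Prop :=
  1 ≤ D ∧ 0 < lamMax ∧ 0 ≤ θ ∧
  ∀ t s, ‖Ψ t s‖ ≤ D * (μ t / μ s) ^ (Real.sign (t - s) * lamMax) * μ s ^ (Real.sign s * θ)

/-- Local boundedness condition (bou-u). -/
def LocBdd {n : ℕ} (μ : ℝ → ℝ) (Ψ : ℝ → ℝ → Euc n →L[ℝ] Euc n) (Dt c lamt : ℝ) : Prop :=
  1 ≤ Dt ∧ 0 < c ∧ 0 < lamt ∧
  ∀ t s, s ∈ Set.Icc (t - c) (t + c) → ‖Ψ t s‖ ≤ Dt * μ |t| ^ lamt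

/-- `f` belongs to the class `𝒜_f`: `f(t,0) = 0` and `f(t,·)` is Lipschitz with
constant `φ(t) = δf · μ(t)^{-1-sign(t)θ} · μ'(t)`. -/
def MemClassAf {n : ℕ} (μ μ' : ℝ → ℝ) (θ δf : ℝ) (f : ℝ → Euc n → Euc n) : Prop :=
  (∀ t, f t 0 = 0) ∧
  ∀ t x y, ‖f t x - f t y‖ ≤ (δf * μ t ^ (-1 - Real.sign t * θ) * μ' t) * ‖x - y‖

/-- `X t τ x₀` is the (unique, globally defined) solution of `x' = A(t)x + f(t,x)`
with `X τ τ x₀ = x₀`. -/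
def IsSolutionFamily {n : ℕ} (A : ℝ → Euc n →L[ℝ] Euc n) (f : ℝ → Euc n → Euc n)
    (X : ℝ → ℝ → Euc n → Euc n) : Prop :=
  (∀ τ x₀, X τ τ x₀ = x₀) ∧
  ∀ τ x₀ t, HasDerivAt (fun r => X r τ x₀) (A t (X t τ x₀) + f t (X t τ x₀)) t

/-- `V_s(t,x) = sup_{κ ≥ t} ‖Ψ(κ,t)x‖ (μ(κ)/μ(t))^{−λs}`. -/
def VsFun {n : ℕ} (μ : ℝ → ℝ) (lams : ℝ) (Ψ : ℝ → ℝ → Euc n →L[ℝ] Euc n)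
    (t : ℝ) (x : Euc n) : ℝ :=
  sSup {r : ℝ | ∃ κ, t ≤ κ ∧ r = ‖Ψ κ t x‖ * (μ κ / μ t) ^ (-lams)}

/-- `V_u(t,x) = sup_{κ ≤ t} ‖Ψ(κ,t)x‖ (μ(κ)/μ(t))^{−λu}`. -/
def VuFun {n : ℕ} (μ : ℝ → ℝ) (lamu : ℝ) (Ψ : ℝ → ℝ → Euc n →L[ℝ] Euc n)
    (t : ℝ) (x : Euc n) : ℝ :=
  sSup {r : ℝ | ∃ κ, κ ≤ t ∧ r = ‖Ψ κ t x‖ * (μ κ / μ t) ^ (-lamu)}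

/-- `ℰ_τ^s = {x : V(t, Ψ(t,τ)x) ≤ 0 for all t}`. -/
def EsSet {n : ℕ} (V : ℝ → Euc n → ℝ) (Ψ : ℝ → ℝ → Euc n →L[ℝ] Euc n) (τ : ℝ) :
    Set (Euc n) := {x | ∀ t, V t (Ψ t τ x) ≤ 0}

/-- `ℰ_τ^u = {x : V(t, Ψ(t,τ)x) ≥ 0 for all t}`. -/
def EuSet {n : ℕ} (V : ℝ → Euc n → ℝ) (Ψ : ℝ → ℝ → Euc n →L[ℝ] Euc n) (τ : ℝ) :
    Set (Euc n) := {x | ∀ t, 0 ≤ V t (Ψ t τ x)}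

/-!
`V_s` and `V_u` are suprema, over a half-line of times `κ`, of the weighted orbit
`κ ↦ ‖Ψ(κ,τ)x‖ (μ(κ)/μ(τ))^(-λ)`. By the cocycle property, moving the base point along the
orbit from `τ` to `t` multiplies this function by `(μ(t)/μ(τ))^λ`, so along a solution `V_s` and
`V_u` change exactly by that factor, up to shrinking or enlarging the half-line. The dichotomy
estimates make the suprema finite, and the term `κ = τ` bounds them below by `‖π(τ)x‖` and
`‖(id - π(τ))x‖`. Claim (i) is then the dichotomy estimate, (ii)–(iv) follow from
`(μ(t)/μ(τ))^λ_s ≤ 1 ≤ (μ(t)/μ(τ))^λ_u` for `t ≥ τ`, and for (v) the sign condition defining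
`ℰ^u_τ` (resp. `ℰ^s_τ`) is used at `τ - 1` (resp. `τ + 1`), where these inequalities are strict.
-/

open scoped Pointwise

theorem ContinuousLinearMap.one_sub_comp_comm {E : Type*} [NormedAddCommGroup E]
    [NormedSpace ℝ E] {p q f : E →L[ℝ] E} (h : p.comp f = f.comp q) :
    (1 - p).comp f = f.comp (1 - q) := by
  rw [sub_comp, comp_sub, h, one_def, id_comp, comp_id]

section WeightedOrbit

variable {n : ℕ} {μ : ℝ → ℝ} {Ψ : ℝ → ℝ → Euc n →L[ℝ] Euc n} {l : ℝ}

def weightedOrbit (μ : ℝ → ℝ) (l : ℝ) (Ψ : ℝ → ℝ → Euc n →L[ℝ] Euc n) (τ : ℝ) (x : Euc n)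
    (κ : ℝ) : ℝ :=
  ‖Ψ κ τ x‖ * (μ κ / μ τ) ^ (-l)

theorem vsFun_eq_sSup_image (t : ℝ) (x : Euc n) :
    VsFun μ l Ψ t x = sSup (weightedOrbit μ l Ψ t x '' Set.Ici t) := by
  simp only [VsFun, weightedOrbit, Set.image, Set.mem_Ici, eq_comm]

theorem vuFun_eq_sSup_image (t : ℝ) (x : Euc n) :
    VuFun μ l Ψ t x = sSup (weightedOrbit μ l Ψ t x '' Set.Iic t) := by
  simp only [VuFun, weightedOrbit, Set.image, Set.mem_Iic, eq_comm]

theorem weightedOrbit_self (hμ : ∀ t, 0 < μ t)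
    (hid : ∀ s, Ψ s s = ContinuousLinearMap.id ℝ (Euc n)) (τ : ℝ) (x : Euc n) :
    weightedOrbit μ l Ψ τ x τ = ‖x‖ := by
  simp [weightedOrbit, hid, div_self (hμ τ).ne']

theorem weightedOrbit_map (hμ : ∀ t, 0 < μ t) (hcomp : ∀ t r s, (Ψ t r).comp (Ψ r s) = Ψ t s)
    (t τ : ℝ) (x : Euc n) :
    weightedOrbit μ l Ψ t (Ψ t τ x) = (μ t / μ τ) ^ l • weightedOrbit μ l Ψ τ x := by
  ext κ
  have hκ := hμ κ; have ht := hμ t; have hτ := hμ τ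
  have hratio : (μ κ / μ t) ^ (-l) = (μ t / μ τ) ^ l * (μ κ / μ τ) ^ (-l) := by
    rw [Real.rpow_neg (by positivity), Real.rpow_neg (by positivity),
      ← Real.inv_rpow (by positivity), ← Real.inv_rpow (by positivity),
      ← Real.mul_rpow (by positivity) (by positivity)]
    congr 1
    field_simp
  simp only [weightedOrbit, Pi.smul_apply, smul_eq_mul, ← ContinuousLinearMap.comp_apply, hcomp,
    hratio]
  ring

theorem image_weightedOrbit_map (hμ : ∀ t, 0 < μ t)
    (hcomp : ∀ t r s, (Ψ t r).comp (Ψ r s) = Ψ t s) (t τ : ℝ) (x : Euc n) (K : Set ℝ) :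
    weightedOrbit μ l Ψ t (Ψ t τ x) '' K = (μ t / μ τ) ^ l • (weightedOrbit μ l Ψ τ x '' K) := by
  rw [weightedOrbit_map hμ hcomp, ← Set.image_smul, Set.image_image]
  rfl

theorem norm_le_sSup_weightedOrbit (hμ : ∀ t, 0 < μ t)
    (hid : ∀ s, Ψ s s = ContinuousLinearMap.id ℝ (Euc n)) {τ : ℝ} {K : Set ℝ} (hτ : τ ∈ K)
    {x : Euc n} (hbdd : BddAbove (weightedOrbit μ l Ψ τ x '' K)) :
    ‖x‖ ≤ sSup (weightedOrbit μ l Ψ τ x '' K) :=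
  weightedOrbit_self hμ hid τ x ▸ le_csSup hbdd (Set.mem_image_of_mem _ hτ)

variable {P : ℝ → Euc n →L[ℝ] Euc n} {K : ℝ → Set ℝ}

theorem bddAbove_image_weightedOrbit (hμ : ∀ t, 0 < μ t)
    (hcomp : ∀ t r s, (Ψ t r).comp (Ψ r s) = Ψ t s)
    (hP : ∀ t s, (P t).comp (Ψ t s) = (Ψ t s).comp (P s))
    (hbdd : ∀ t y, BddAbove (weightedOrbit μ l Ψ t (P t y) '' K t)) (t τ : ℝ) (x : Euc n) :
    BddAbove (weightedOrbit μ l Ψ τ (P τ x) '' K t) := by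
  have hr : 0 < (μ t / μ τ) ^ l := by have := hμ t; have := hμ τ; positivity
  have h := hbdd t (Ψ t τ x)
  rwa [← ContinuousLinearMap.comp_apply, hP, ContinuousLinearMap.comp_apply,
    image_weightedOrbit_map hμ hcomp, bddAbove_smul_iff_of_pos hr] at h

theorem sSup_weightedOrbit_map_le (hμ : ∀ t, 0 < μ t)
    (hcomp : ∀ t r s, (Ψ t r).comp (Ψ r s) = Ψ t s)
    (hP : ∀ t s, (P t).comp (Ψ t s) = (Ψ t s).comp (P s))
    (hbdd : ∀ t y, BddAbove (weightedOrbit μ l Ψ t (P t y) '' K t)) {t τ : ℝ}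
    (hK : K t ⊆ K τ) (hne : (K t).Nonempty) (x : Euc n) :
    sSup (weightedOrbit μ l Ψ t (P t (Ψ t τ x)) '' K t) ≤
      (μ t / μ τ) ^ l * sSup (weightedOrbit μ l Ψ τ (P τ x) '' K τ) := by
  have hr : 0 ≤ (μ t / μ τ) ^ l := by have := hμ t; have := hμ τ; positivity
  rw [← ContinuousLinearMap.comp_apply, hP, ContinuousLinearMap.comp_apply,
    image_weightedOrbit_map hμ hcomp, Real.sSup_smul_of_nonneg hr, smul_eq_mul]
  exact mul_le_mul_of_nonneg_left
    (csSup_le_csSup (hbdd τ x) (hne.image _) (Set.image_mono hK)) hr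

theorem le_sSup_weightedOrbit_map (hμ : ∀ t, 0 < μ t)
    (hcomp : ∀ t r s, (Ψ t r).comp (Ψ r s) = Ψ t s)
    (hP : ∀ t s, (P t).comp (Ψ t s) = (Ψ t s).comp (P s))
    (hbdd : ∀ t y, BddAbove (weightedOrbit μ l Ψ t (P t y) '' K t)) {t τ : ℝ}
    (hK : K τ ⊆ K t) (hne : (K τ).Nonempty) (x : Euc n) :
    (μ t / μ τ) ^ l * sSup (weightedOrbit μ l Ψ τ (P τ x) '' K τ) ≤
      sSup (weightedOrbit μ l Ψ t (P t (Ψ t τ x)) '' K t) := by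
  have hr : 0 ≤ (μ t / μ τ) ^ l := by have := hμ t; have := hμ τ; positivity
  rw [← ContinuousLinearMap.comp_apply, hP, ContinuousLinearMap.comp_apply,
    image_weightedOrbit_map hμ hcomp, Real.sSup_smul_of_nonneg hr, smul_eq_mul]
  exact mul_le_mul_of_nonneg_left
    (csSup_le_csSup (bddAbove_image_weightedOrbit hμ hcomp hP hbdd t τ x) (hne.image _)
      (Set.image_mono hK)) hr

theorem weightedOrbit_le_of_opNorm_le (hμ : ∀ t, 0 < μ t) {T : Euc n →L[ℝ] Euc n}
    {κ τ D C : ℝ} (h : ‖(Ψ κ τ).comp T‖ ≤ D * (μ κ / μ τ) ^ l * C) (x : Euc n) :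
    weightedOrbit μ l Ψ τ (T x) κ ≤ D * C * ‖x‖ := by
  have hq : 0 < μ κ / μ τ := div_pos (hμ κ) (hμ τ)
  calc weightedOrbit μ l Ψ τ (T x) κ
      ≤ D * (μ κ / μ τ) ^ l * C * ‖x‖ * (μ κ / μ τ) ^ (-l) := by
        refine mul_le_mul_of_nonneg_right ?_ (Real.rpow_nonneg hq.le _)
        exact ((Ψ κ τ).comp T).le_opNorm x |>.trans (mul_le_mul_of_nonneg_right h (norm_nonneg x))
    _ = D * C * ‖x‖ * ((μ κ / μ τ) ^ l * (μ κ / μ τ) ^ (-l)) := by ring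
    _ = D * C * ‖x‖ := by rw [← Real.rpow_add hq, add_neg_cancel, Real.rpow_zero, mul_one]

end WeightedOrbit

section Dichotomy

variable {n : ℕ} {μ : ℝ → ℝ} {Ψ : ℝ → ℝ → Euc n →L[ℝ] Euc n} {π : ℝ → Euc n →L[ℝ] Euc n}
  {D lams lamu ν ω : ℝ}

theorem HasMuDichotomy.const_nonneg (hdich : HasMuDichotomy μ Ψ π D lams lamu ν ω) : 0 ≤ D :=
  zero_le_one.trans hdich.2.2.1

theorem HasMuDichotomy.lams_neg (hdich : HasMuDichotomy μ Ψ π D lams lamu ν ω) : lams < 0 :=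
  hdich.2.2.2.1

theorem HasMuDichotomy.lamu_pos (hdich : HasMuDichotomy μ Ψ π D lams lamu ν ω) : 0 < lamu :=
  hdich.2.2.2.2.1

theorem HasMuDichotomy.proj_comp_comm (hdich : HasMuDichotomy μ Ψ π D lams lamu ν ω) (t s : ℝ) :
    (π t).comp (Ψ t s) = (Ψ t s).comp (π s) :=
  hdich.2.1 t s

theorem HasMuDichotomy.compl_comp_comm (hdich : HasMuDichotomy μ Ψ π D lams lamu ν ω) (t s : ℝ) :
    (1 - π t).comp (Ψ t s) = (Ψ t s).comp (1 - π s) :=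
  ContinuousLinearMap.one_sub_comp_comm (hdich.proj_comp_comm t s)

theorem weightedOrbit_stable_le (hμ : ∀ t, 0 < μ t) (hdich : HasMuDichotomy μ Ψ π D lams lamu ν ω)
    {t κ : ℝ} (hκ : t ≤ κ) (x : Euc n) :
    weightedOrbit μ lams Ψ t (π t x) κ ≤ D * μ t ^ (Real.sign t * ν) * ‖x‖ := by
  obtain ⟨-, -, -, -, -, -, -, -, -, hstable, -⟩ := hdich
  exact weightedOrbit_le_of_opNorm_le hμ (hstable κ t hκ) x

theorem weightedOrbit_unstable_le (hμ : ∀ t, 0 < μ t)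
    (hdich : HasMuDichotomy μ Ψ π D lams lamu ν ω) {t κ : ℝ} (hκ : κ ≤ t) (x : Euc n) :
    weightedOrbit μ lamu Ψ t ((1 - π t) x) κ ≤ D * μ t ^ (Real.sign t * ω) * ‖x‖ := by
  obtain ⟨-, -, -, -, -, -, -, -, -, -, hunstable⟩ := hdich
  exact weightedOrbit_le_of_opNorm_le hμ (hunstable κ t hκ) x

theorem bddAbove_stable (hμ : ∀ t, 0 < μ t) (hdich : HasMuDichotomy μ Ψ π D lams lamu ν ω)
    (t : ℝ) (x : Euc n) : BddAbove (weightedOrbit μ lams Ψ t (π t x) '' Set.Ici t) :=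
  ⟨_, Set.forall_mem_image.2 fun _ hκ => weightedOrbit_stable_le hμ hdich hκ x⟩

theorem bddAbove_unstable (hμ : ∀ t, 0 < μ t) (hdich : HasMuDichotomy μ Ψ π D lams lamu ν ω)
    (t : ℝ) (x : Euc n) : BddAbove (weightedOrbit μ lamu Ψ t ((1 - π t) x) '' Set.Iic t) :=
  ⟨_, Set.forall_mem_image.2 fun _ hκ => weightedOrbit_unstable_le hμ hdich hκ x⟩

theorem vsFun_proj_le (hμ : ∀ t, 0 < μ t) (hdich : HasMuDichotomy μ Ψ π D lams lamu ν ω)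
    (t : ℝ) (x : Euc n) : VsFun μ lams Ψ t (π t x) ≤ D * μ t ^ (Real.sign t * ν) * ‖x‖ := by
  rw [vsFun_eq_sSup_image]
  exact csSup_le (Set.nonempty_Ici.image _)
    (Set.forall_mem_image.2 fun _ hκ => weightedOrbit_stable_le hμ hdich hκ x)

theorem vuFun_compl_le (hμ : ∀ t, 0 < μ t) (hdich : HasMuDichotomy μ Ψ π D lams lamu ν ω)
    (t : ℝ) (x : Euc n) :
    VuFun μ lamu Ψ t ((1 - π t) x) ≤ D * μ t ^ (Real.sign t * ω) * ‖x‖ := by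
  rw [vuFun_eq_sSup_image]
  exact csSup_le (Set.nonempty_Iic.image _)
    (Set.forall_mem_image.2 fun _ hκ => weightedOrbit_unstable_le hμ hdich hκ x)

theorem norm_le_vsFun_add_vuFun (hμ : ∀ t, 0 < μ t)
    (hid : ∀ s, Ψ s s = ContinuousLinearMap.id ℝ (Euc n))
    (hdich : HasMuDichotomy μ Ψ π D lams lamu ν ω) (t : ℝ) (x : Euc n) :
    ‖x‖ ≤ VsFun μ lams Ψ t (π t x) + VuFun μ lamu Ψ t ((1 - π t) x) := by
  rw [vsFun_eq_sSup_image, vuFun_eq_sSup_image]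
  calc ‖x‖ ≤ ‖π t x‖ + ‖(1 - π t) x‖ := by
        simpa only [sub_apply, one_apply_eq_self]
          using norm_le_norm_add_norm_sub' x (π t x)
    _ ≤ _ := add_le_add
        (norm_le_sSup_weightedOrbit hμ hid Set.self_mem_Ici (bddAbove_stable hμ hdich t x))
        (norm_le_sSup_weightedOrbit hμ hid Set.self_mem_Iic (bddAbove_unstable hμ hdich t x))

theorem vsFun_proj_nonneg (hμ : ∀ t, 0 < μ t)
    (hid : ∀ s, Ψ s s = ContinuousLinearMap.id ℝ (Euc n))
    (hdich : HasMuDichotomy μ Ψ π D lams lamu ν ω) (t : ℝ) (x : Euc n) :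
    0 ≤ VsFun μ lams Ψ t (π t x) := by
  rw [vsFun_eq_sSup_image]
  exact (norm_nonneg _).trans
    (norm_le_sSup_weightedOrbit hμ hid Set.self_mem_Ici (bddAbove_stable hμ hdich t x))

theorem vuFun_compl_nonneg (hμ : ∀ t, 0 < μ t)
    (hid : ∀ s, Ψ s s = ContinuousLinearMap.id ℝ (Euc n))
    (hdich : HasMuDichotomy μ Ψ π D lams lamu ν ω) (t : ℝ) (x : Euc n) :
    0 ≤ VuFun μ lamu Ψ t ((1 - π t) x) := by
  rw [vuFun_eq_sSup_image]
  exact (norm_nonneg _).trans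
    (norm_le_sSup_weightedOrbit hμ hid Set.self_mem_Iic (bddAbove_unstable hμ hdich t x))

theorem vsFun_map_le (hμ : ∀ t, 0 < μ t) (hcomp : ∀ t r s, (Ψ t r).comp (Ψ r s) = Ψ t s)
    (hdich : HasMuDichotomy μ Ψ π D lams lamu ν ω) {τ t : ℝ} (h : τ ≤ t) (x : Euc n) :
    VsFun μ lams Ψ t (π t (Ψ t τ x)) ≤ (μ t / μ τ) ^ lams * VsFun μ lams Ψ τ (π τ x) := by
  simp only [vsFun_eq_sSup_image]
  exact sSup_weightedOrbit_map_le hμ hcomp hdich.proj_comp_comm (bddAbove_stable hμ hdich)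
    (Set.Ici_subset_Ici.2 h) Set.nonempty_Ici x

theorem le_vsFun_map (hμ : ∀ t, 0 < μ t) (hcomp : ∀ t r s, (Ψ t r).comp (Ψ r s) = Ψ t s)
    (hdich : HasMuDichotomy μ Ψ π D lams lamu ν ω) {τ t : ℝ} (h : t ≤ τ) (x : Euc n) :
    (μ t / μ τ) ^ lams * VsFun μ lams Ψ τ (π τ x) ≤ VsFun μ lams Ψ t (π t (Ψ t τ x)) := by
  simp only [vsFun_eq_sSup_image]
  exact le_sSup_weightedOrbit_map hμ hcomp hdich.proj_comp_comm (bddAbove_stable hμ hdich)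
    (Set.Ici_subset_Ici.2 h) Set.nonempty_Ici x

theorem le_vuFun_map (hμ : ∀ t, 0 < μ t) (hcomp : ∀ t r s, (Ψ t r).comp (Ψ r s) = Ψ t s)
    (hdich : HasMuDichotomy μ Ψ π D lams lamu ν ω) {τ t : ℝ} (h : τ ≤ t) (x : Euc n) :
    (μ t / μ τ) ^ lamu * VuFun μ lamu Ψ τ ((1 - π τ) x) ≤
      VuFun μ lamu Ψ t ((1 - π t) (Ψ t τ x)) := by
  simp only [vuFun_eq_sSup_image]
  exact le_sSup_weightedOrbit_map (P := fun t => 1 - π t) hμ hcomp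
    hdich.compl_comp_comm (bddAbove_unstable hμ hdich)
    (Set.Iic_subset_Iic.2 h) Set.nonempty_Iic x

theorem vuFun_map_le (hμ : ∀ t, 0 < μ t) (hcomp : ∀ t r s, (Ψ t r).comp (Ψ r s) = Ψ t s)
    (hdich : HasMuDichotomy μ Ψ π D lams lamu ν ω) {τ t : ℝ} (h : t ≤ τ) (x : Euc n) :
    VuFun μ lamu Ψ t ((1 - π t) (Ψ t τ x)) ≤
      (μ t / μ τ) ^ lamu * VuFun μ lamu Ψ τ ((1 - π τ) x) := by
  simp only [vuFun_eq_sSup_image]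
  exact sSup_weightedOrbit_map_le (P := fun t => 1 - π t) hμ hcomp
    hdich.compl_comp_comm (bddAbove_unstable hμ hdich)
    (Set.Iic_subset_Iic.2 h) Set.nonempty_Iic x

end Dichotomy

section GrowthRate

variable {μ : ℝ → ℝ} {τ t l : ℝ}

theorem one_le_div_of_le (hμ : IsGrowthRate μ) (h : τ ≤ t) : 1 ≤ μ t / μ τ :=
  (one_le_div (hμ.2.1 τ)).2 (hμ.1.monotone h)

theorem div_rpow_le_one (hμ : IsGrowthRate μ) (h : τ ≤ t) (hl : l ≤ 0) : (μ t / μ τ) ^ l ≤ 1 :=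
  Real.rpow_le_one_of_one_le_of_nonpos (one_le_div_of_le hμ h) hl

theorem one_le_div_rpow (hμ : IsGrowthRate μ) (h : τ ≤ t) (hl : 0 ≤ l) : 1 ≤ (μ t / μ τ) ^ l :=
  Real.one_le_rpow (one_le_div_of_le hμ h) hl

theorem min_rpow_sub_pos_of_lt (hμ : IsGrowthRate μ) {lams lamu : ℝ} (hlams : lams < 0)
    (hlamu : 0 < lamu) (h : t < τ) :
    0 < min ((μ t / μ τ) ^ lams - 1) (1 - (μ t / μ τ) ^ lamu) := by
  have hpos : 0 < μ t / μ τ := div_pos (hμ.2.1 t) (hμ.2.1 τ)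
  have hlt : μ t / μ τ < 1 := (div_lt_one (hμ.2.1 τ)).2 (hμ.1 h)
  exact lt_min (sub_pos.2 (Real.one_lt_rpow_of_pos_of_lt_one_of_neg hpos hlt hlams))
    (sub_pos.2 (Real.rpow_lt_one hpos.le hlt hlamu))

theorem min_rpow_sub_pos_of_gt (hμ : IsGrowthRate μ) {lams lamu : ℝ} (hlams : lams < 0)
    (hlamu : 0 < lamu) (h : τ < t) :
    0 < min (1 - (μ t / μ τ) ^ lams) ((μ t / μ τ) ^ lamu - 1) := by
  have hgt : 1 < μ t / μ τ := (one_lt_div (hμ.2.1 τ)).2 (hμ.1 h)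
  exact lt_min (sub_pos.2 (Real.rpow_lt_one_of_one_lt_of_neg hgt hlams))
    (sub_pos.2 (Real.one_lt_rpow hgt hlamu))

end GrowthRate

theorem mul_add_le_sub_of_mul_le {s u α β C : ℝ} (hs : 0 ≤ s) (hu : 0 ≤ u) (hα : C ≤ α - 1)
    (hβ : C ≤ 1 - β) (h : α * s ≤ β * u) : C * (s + u) ≤ u - s := by
  have hαs : (1 + C) * s ≤ α * s := mul_le_mul_of_nonneg_right (by linarith) hs
  have hβu : β * u ≤ (1 - C) * u := mul_le_mul_of_nonneg_right (by linarith) hu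
  linarith

section Lyapunov

variable {n : ℕ} {μ : ℝ → ℝ} {Ψ : ℝ → ℝ → Euc n →L[ℝ] Euc n} {π : ℝ → Euc n →L[ℝ] Euc n}
  {D lams lamu ν ω : ℝ} {V : ℝ → Euc n → ℝ}

theorem lyapunov_abs_le (hμ : ∀ t, 0 < μ t) (hid : ∀ s, Ψ s s = ContinuousLinearMap.id ℝ (Euc n))
    (hdich : HasMuDichotomy μ Ψ π D lams lamu ν ω)
    (hV : ∀ t x, V t x = -(VsFun μ lams Ψ t (π t x)) + VuFun μ lamu Ψ t ((1 - π t) x))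
    (t : ℝ) (x : Euc n) :
    |V t x| ≤ 2 * D * max (μ t ^ (Real.sign t * ν)) (μ t ^ (Real.sign t * ω)) * ‖x‖ := by
  set M := D * max (μ t ^ (Real.sign t * ν)) (μ t ^ (Real.sign t * ω)) * ‖x‖
  have hD := hdich.const_nonneg
  have hS : VsFun μ lams Ψ t (π t x) ≤ M := (vsFun_proj_le hμ hdich t x).trans <|
    mul_le_mul_of_nonneg_right (mul_le_mul_of_nonneg_left (le_max_left _ _) hD) (norm_nonneg x)
  have hU : VuFun μ lamu Ψ t ((1 - π t) x) ≤ M := (vuFun_compl_le hμ hdich t x).trans <|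
    mul_le_mul_of_nonneg_right (mul_le_mul_of_nonneg_left (le_max_right _ _) hD) (norm_nonneg x)
  have hS0 := vsFun_proj_nonneg hμ hid hdich t x
  have hU0 := vuFun_compl_nonneg hμ hid hdich t x
  rw [hV, abs_le]
  constructor <;> linarith

theorem lyapunov_le_map (hμ : IsGrowthRate μ) (hid : ∀ s, Ψ s s = ContinuousLinearMap.id ℝ (Euc n))
    (hcomp : ∀ t r s, (Ψ t r).comp (Ψ r s) = Ψ t s) (hdich : HasMuDichotomy μ Ψ π D lams lamu ν ω)
    (hV : ∀ t x, V t x = -(VsFun μ lams Ψ t (π t x)) + VuFun μ lamu Ψ t ((1 - π t) x))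
    {τ t : ℝ} (h : τ ≤ t) (x : Euc n) : V τ x ≤ V t (Ψ t τ x) := by
  have hS := vsFun_map_le hμ.2.1 hcomp hdich h x
  have hU := le_vuFun_map hμ.2.1 hcomp hdich h x
  have hS' := mul_le_of_le_one_left (vsFun_proj_nonneg hμ.2.1 hid hdich τ x)
    (div_rpow_le_one hμ h hdich.lams_neg.le)
  have hU' := le_mul_of_one_le_left (vuFun_compl_nonneg hμ.2.1 hid hdich τ x)
    (one_le_div_rpow hμ h hdich.lamu_pos.le)
  rw [hV, hV]
  linarith

theorem rpow_mul_lyapunov_le_map (hμ : IsGrowthRate μ)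
    (hid : ∀ s, Ψ s s = ContinuousLinearMap.id ℝ (Euc n))
    (hcomp : ∀ t r s, (Ψ t r).comp (Ψ r s) = Ψ t s) (hdich : HasMuDichotomy μ Ψ π D lams lamu ν ω)
    (hV : ∀ t x, V t x = -(VsFun μ lams Ψ t (π t x)) + VuFun μ lamu Ψ t ((1 - π t) x))
    {τ t : ℝ} (h : τ ≤ t) (x : Euc n) : (μ t / μ τ) ^ lamu * V τ x ≤ V t (Ψ t τ x) := by
  have hS := vsFun_map_le hμ.2.1 hcomp hdich h x
  have hU := le_vuFun_map hμ.2.1 hcomp hdich h x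
  have hS' : (μ t / μ τ) ^ lams * VsFun μ lams Ψ τ (π τ x) ≤
      (μ t / μ τ) ^ lamu * VsFun μ lams Ψ τ (π τ x) :=
    mul_le_mul_of_nonneg_right ((div_rpow_le_one hμ h hdich.lams_neg.le).trans
      (one_le_div_rpow hμ h hdich.lamu_pos.le)) (vsFun_proj_nonneg hμ.2.1 hid hdich τ x)
  rw [hV, hV]
  linarith

theorem abs_lyapunov_map_le_of_mem_esSet (hμ : IsGrowthRate μ)
    (hid : ∀ s, Ψ s s = ContinuousLinearMap.id ℝ (Euc n))
    (hcomp : ∀ t r s, (Ψ t r).comp (Ψ r s) = Ψ t s) (hdich : HasMuDichotomy μ Ψ π D lams lamu ν ω)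
    (hV : ∀ t x, V t x = -(VsFun μ lams Ψ t (π t x)) + VuFun μ lamu Ψ t ((1 - π t) x))
    {τ t : ℝ} (h : τ ≤ t) {x : Euc n} (hx : x ∈ EsSet V Ψ τ) :
    |V t (Ψ t τ x)| ≤ (μ t / μ τ) ^ lams * |V τ x| := by
  have hVτ : V τ x ≤ 0 := by simpa [hid] using hx τ
  have hS := vsFun_map_le hμ.2.1 hcomp hdich h x
  have hU := le_vuFun_map hμ.2.1 hcomp hdich h x
  have hU' : (μ t / μ τ) ^ lams * VuFun μ lamu Ψ τ ((1 - π τ) x) ≤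
      (μ t / μ τ) ^ lamu * VuFun μ lamu Ψ τ ((1 - π τ) x) :=
    mul_le_mul_of_nonneg_right ((div_rpow_le_one hμ h hdich.lams_neg.le).trans
      (one_le_div_rpow hμ h hdich.lamu_pos.le)) (vuFun_compl_nonneg hμ.2.1 hid hdich τ x)
  rw [abs_of_nonpos (hx t), abs_of_nonpos hVτ, hV, hV]
  linarith

theorem mul_norm_le_lyapunov_of_mem_euSet (hμ : IsGrowthRate μ)
    (hid : ∀ s, Ψ s s = ContinuousLinearMap.id ℝ (Euc n))
    (hcomp : ∀ t r s, (Ψ t r).comp (Ψ r s) = Ψ t s) (hdich : HasMuDichotomy μ Ψ π D lams lamu ν ω)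
    (hV : ∀ t x, V t x = -(VsFun μ lams Ψ t (π t x)) + VuFun μ lamu Ψ t ((1 - π t) x))
    {τ t : ℝ} (h : t < τ) {x : Euc n} (hx : x ∈ EuSet V Ψ τ) :
    min ((μ t / μ τ) ^ lams - 1) (1 - (μ t / μ τ) ^ lamu) * ‖x‖ ≤ V τ x := by
  have hS := le_vsFun_map hμ.2.1 hcomp hdich h.le x
  have hU := vuFun_map_le hμ.2.1 hcomp hdich h.le x
  have hVt := hV t (Ψ t τ x) ▸ hx t
  have hC := min_rpow_sub_pos_of_lt hμ hdich.lams_neg hdich.lamu_pos h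
  set S := VsFun μ lams Ψ τ (π τ x)
  set U := VuFun μ lamu Ψ τ ((1 - π τ) x)
  calc _ ≤ _ * (S + U) :=
        mul_le_mul_of_nonneg_left (norm_le_vsFun_add_vuFun hμ.2.1 hid hdich τ x) hC.le
    _ ≤ U - S := mul_add_le_sub_of_mul_le (vsFun_proj_nonneg hμ.2.1 hid hdich τ x)
        (vuFun_compl_nonneg hμ.2.1 hid hdich τ x) (min_le_left _ _) (min_le_right _ _)
        (by linarith)
    _ = V τ x := by rw [hV]; ring

theorem mul_norm_le_abs_lyapunov_of_mem_esSet (hμ : IsGrowthRate μ)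
    (hid : ∀ s, Ψ s s = ContinuousLinearMap.id ℝ (Euc n))
    (hcomp : ∀ t r s, (Ψ t r).comp (Ψ r s) = Ψ t s) (hdich : HasMuDichotomy μ Ψ π D lams lamu ν ω)
    (hV : ∀ t x, V t x = -(VsFun μ lams Ψ t (π t x)) + VuFun μ lamu Ψ t ((1 - π t) x))
    {τ t : ℝ} (h : τ < t) {x : Euc n} (hx : x ∈ EsSet V Ψ τ) :
    min (1 - (μ t / μ τ) ^ lams) ((μ t / μ τ) ^ lamu - 1) * ‖x‖ ≤ |V τ x| := by
  have hS := vsFun_map_le hμ.2.1 hcomp hdich h.le x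
  have hU := le_vuFun_map hμ.2.1 hcomp hdich h.le x
  have hVt := hV t (Ψ t τ x) ▸ hx t
  have hC := min_rpow_sub_pos_of_gt hμ hdich.lams_neg hdich.lamu_pos h
  set S := VsFun μ lams Ψ τ (π τ x)
  set U := VuFun μ lamu Ψ τ ((1 - π τ) x)
  calc _ ≤ _ * (U + S) := mul_le_mul_of_nonneg_left
        ((norm_le_vsFun_add_vuFun hμ.2.1 hid hdich τ x).trans_eq (add_comm S U)) hC.le
    _ ≤ S - U := mul_add_le_sub_of_mul_le (vuFun_compl_nonneg hμ.2.1 hid hdich τ x)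
        (vsFun_proj_nonneg hμ.2.1 hid hdich τ x) (min_le_right _ _) (min_le_left _ _)
        (by linarith)
    _ = -V τ x := by rw [hV]; ring
    _ ≤ |V τ x| := neg_le_abs _

end Lyapunov

theorem strict_lyapunov_from_dichotomy_general
    {n : ℕ}
    (μ : ℝ → ℝ) (hμ : IsGrowthRate μ)
    (A : ℝ → Euc n →L[ℝ] Euc n) (Ψ : ℝ → ℝ → Euc n →L[ℝ] Euc n)
    (hΨ : IsEvolution A Ψ)
    (π : ℝ → Euc n →L[ℝ] Euc n) (D lams lamu ν ω : ℝ)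
    (hdich : HasMuDichotomy μ Ψ π D lams lamu ν ω)
    (V : ℝ → Euc n → ℝ)
    (hV : ∀ t x, V t x = -(VsFun μ lams Ψ t (π t x)) + VuFun μ lamu Ψ t ((1 - π t) x)) :
    -- (i)
    (∀ t : ℝ, ∀ x : Euc n,
      |V t x| ≤ 2 * D * max (μ t ^ (Real.sign t * ν)) (μ t ^ (Real.sign t * ω)) * ‖x‖) ∧
    -- (ii)
    (∀ τ t : ℝ, τ ≤ t → ∀ x : Euc n, V τ x ≤ V t (Ψ t τ x)) ∧
    -- (iii)
    (∀ τ t : ℝ, τ ≤ t → ∀ x ∈ EuSet V Ψ τ,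
      (μ t / μ τ) ^ lamu * V τ x ≤ V t (Ψ t τ x)) ∧
    -- (iv)
    (∀ τ t : ℝ, τ ≤ t → ∀ x ∈ EsSet V Ψ τ,
      |V t (Ψ t τ x)| ≤ (μ t / μ τ) ^ lams * |V τ x|) ∧
    -- (v)
    (∀ τ : ℝ,
      0 < min ((μ (τ - 1) / μ τ) ^ lams - 1) (1 - (μ (τ - 1) / μ τ) ^ lamu) ∧
      0 < min (1 - (μ (τ + 1) / μ τ) ^ lams) ((μ (τ + 1) / μ τ) ^ lamu - 1) ∧
      (∀ x ∈ EuSet V Ψ τ,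
        min ((μ (τ - 1) / μ τ) ^ lams - 1) (1 - (μ (τ - 1) / μ τ) ^ lamu) * ‖x‖ ≤ V τ x) ∧
      (∀ x ∈ EsSet V Ψ τ,
        min (1 - (μ (τ + 1) / μ τ) ^ lams) ((μ (τ + 1) / μ τ) ^ lamu - 1) * ‖x‖ ≤ |V τ x|)) := by
  obtain ⟨hid, hcomp, -⟩ := hΨ
  refine ⟨lyapunov_abs_le hμ.2.1 hid hdich hV,
    fun τ t h x => lyapunov_le_map hμ hid hcomp hdich hV h x,
    fun τ t h x _ => rpow_mul_lyapunov_le_map hμ hid hcomp hdich hV h x,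
    fun τ t h x hx => abs_lyapunov_map_le_of_mem_esSet hμ hid hcomp hdich hV h hx,
    fun τ => ⟨min_rpow_sub_pos_of_lt hμ hdich.lams_neg hdich.lamu_pos (sub_one_lt τ),
      min_rpow_sub_pos_of_gt hμ hdich.lams_neg hdich.lamu_pos (lt_add_one τ),
      fun x hx => mul_norm_le_lyapunov_of_mem_euSet hμ hid hcomp hdich hV (sub_one_lt τ) hx,
      fun x hx => mul_norm_le_abs_lyapunov_of_mem_esSet hμ hid hcomp hdich hV (lt_add_one τ) hx⟩⟩

/-- Proposition: a nonuniform μ-dichotomy yields a strict Lyapunov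
function, given explicitly by `V(t,x) = −V_s(t,π(t)x) + V_u(t,(id−π(t))x)`. -/
theorem strict_lyapunov_from_dichotomy
    {n : ℕ} (hn : 1 ≤ n)
    (μ : ℝ → ℝ) (hμ : IsGrowthRate μ)
    (A : ℝ → Euc n →L[ℝ] Euc n) (Ψ : ℝ → ℝ → Euc n →L[ℝ] Euc n)
    (hΨ : IsEvolution A Ψ)
    (π : ℝ → Euc n →L[ℝ] Euc n) (D lams lamu ν ω : ℝ)
    (hdich : HasMuDichotomy μ Ψ π D lams lamu ν ω)
    (V : ℝ → Euc n → ℝ)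
    (hV : ∀ t x, V t x = -(VsFun μ lams Ψ t (π t x)) + VuFun μ lamu Ψ t ((1 - π t) x)) :
    -- (i)
    (∀ t : ℝ, ∀ x : Euc n,
      |V t x| ≤ 2 * D * max (μ t ^ (Real.sign t * ν)) (μ t ^ (Real.sign t * ω)) * ‖x‖) ∧
    -- (ii)
    (∀ τ t : ℝ, τ ≤ t → ∀ x : Euc n, V τ x ≤ V t (Ψ t τ x)) ∧
    -- (iii)
    (∀ τ t : ℝ, τ ≤ t → ∀ x ∈ EuSet V Ψ τ,
      (μ t / μ τ) ^ lamu * V τ x ≤ V t (Ψ t τ x)) ∧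
    -- (iv)
    (∀ τ t : ℝ, τ ≤ t → ∀ x ∈ EsSet V Ψ τ,
      |V t (Ψ t τ x)| ≤ (μ t / μ τ) ^ lams * |V τ x|) ∧
    -- (v)
    (∀ τ : ℝ,
      0 < min ((μ (τ - 1) / μ τ) ^ lams - 1) (1 - (μ (τ - 1) / μ τ) ^ lamu) ∧
      0 < min (1 - (μ (τ + 1) / μ τ) ^ lams) ((μ (τ + 1) / μ τ) ^ lamu - 1) ∧
      (∀ x ∈ EuSet V Ψ τ,
        min ((μ (τ - 1) / μ τ) ^ lams - 1) (1 - (μ (τ - 1) / μ τ) ^ lamu) * ‖x‖ ≤ V τ x) ∧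
      (∀ x ∈ EsSet V Ψ τ,
        min (1 - (μ (τ + 1) / μ τ) ^ lams) ((μ (τ + 1) / μ τ) ^ lamu - 1) * ‖x‖ ≤ |V τ x|)) :=
  strict_lyapunov_from_dichotomy_general μ hμ A Ψ hΨ π D lams lamu ν ω hdich V hV
end
end

section
/- Let μ be a growth rate, Ψ the evolution operator of x' = A(t)x, and V : ℝ × ℝⁿ → ℝ a function satisfying |V(τ,x)| ≤ C μ(τ)^{sign(τ)ε} ‖x‖ for all τ, x, where C > 0 and ε ≥ 0. Let α < 0, β < 0, and for each τ ∈ ℝ let 𝒢_τ^s and 𝒢_τ^u be subspaces of ℝⁿ with Ψ(t,τ)𝒢_τ^s = 𝒢_t^s and Ψ(t,τ)𝒢_τ^u = 𝒢_t^u for all t, τ. Assume: V(τ,x) ≤ 0 for x ∈ 𝒢_τ^s and V(τ,x) ≥ 0 for x ∈ 𝒢_τ^u; for x ∈ 𝒢_τ^u, V(t, Ψ(t,τ)x) ≥ (μ(τ)/μ(t))^{α} V(τ,x) for all t ≥ τ; for x ∈ 𝒢_τ^s, |V(t, Ψ(t,τ)x)| ≤ (μ(t)/μ(τ))^{β} |V(τ,x)|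 for all t ≥ τ; and |V(τ,x)| ≥ μ(τ)^{−sign(τ)ε} ‖x‖ / C for x ∈ 𝒢_τ^s ∪ 𝒢_τ^u. Then for all t ≥ τ: ‖Ψ(t,τ)x‖ ≤ C² (μ(t)/μ(τ))^{β + sign(t)ε} μ(τ)^{2 sign(τ)ε} ‖x‖ for every x ∈ 𝒢_τ^s, and ‖Ψ(t,τ)^{−1} y‖ ≤ C² (μ(τ)/μ(t))^{−α + sign(τ)ε} μ(t)^{2 sign(t)ε} ‖y‖ for every y ∈ 𝒢_t^u. -/
open Filter MeasureTheory
open scoped Topology RealInnerProductSpace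

noncomputable section

/-! The two-sided bounds on `|V|` turn the evolution of `V` into an evolution of norms. On the
stable subspaces `‖Ψ(t,τ)x‖ ≲ |V(t, Ψ(t,τ)x)| ≤ (μ(t)/μ(τ))^β |V(τ,x)| ≲ (μ(t)/μ(τ))^β ‖x‖`, and on
the unstable ones the growth of `V` gives the same chain for `Ψ(τ,t) = Ψ(t,τ)⁻¹`. The weights
`μ^{±sign·ε}` hidden in `≲` are merged using `μ(s)^c ≤ μ(s)^{sign(s)ε}` for `|c| ≤ ε`, which holds
because `μ(s) ≥ 1` exactly when `s ≥ 0`. -/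

theorem Real.abs_sign_mul_le (u : ℝ) {ε : ℝ} (hε : 0 ≤ ε) : |Real.sign u * ε| ≤ ε := by
  rw [abs_mul, abs_of_nonneg hε]
  rcases Real.sign_apply_eq u with h | h | h <;> simp [h, hε]

theorem rpow_le_rpow_sign_mul {μ : ℝ → ℝ} (hmono : Monotone μ) (hpos : ∀ t, 0 < μ t)
    (h0 : μ 0 = 1) {c ε : ℝ} (hc : |c| ≤ ε) (s : ℝ) :
    μ s ^ c ≤ μ s ^ (Real.sign s * ε) := by
  rcases lt_trichotomy s 0 with hs | rfl | hs
  · rw [Real.sign_of_neg hs, neg_one_mul]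
    exact Real.rpow_le_rpow_of_exponent_ge (hpos s) (h0 ▸ hmono hs.le) (neg_le_of_abs_le hc)
  · simp [h0]
  · rw [Real.sign_of_pos hs, one_mul]
    exact Real.rpow_le_rpow_of_exponent_le (h0 ▸ hmono hs.le) (le_of_abs_le hc)

theorem le_mul_rpow_mul_of_rpow_neg_mul_div_le {m e C N v : ℝ} (hm : 0 < m) (hC : 0 < C)
    (h : m ^ (-e) * N / C ≤ v) : N ≤ C * m ^ e * v := by
  rw [Real.rpow_neg hm.le, div_le_iff₀ hC, inv_mul_le_iff₀ (by positivity)] at h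
  linarith

theorem mul_rpow_mul_div_rpow_le {a b C N γ p q : ℝ} (ha : 0 < a) (hb : 0 < b) (hN : 0 ≤ N)
    (hpq : b ^ p ≤ b ^ q) :
    C * a ^ p * ((a / b) ^ γ * (C * b ^ q * N)) ≤
      C ^ 2 * (a / b) ^ (γ + p) * b ^ (2 * q) * N := by
  have hbp : 0 < b ^ p := by positivity
  calc C * a ^ p * ((a / b) ^ γ * (C * b ^ q * N))
      = C ^ 2 * (a / b) ^ γ * a ^ p * b ^ q * N := by ring
    _ ≤ C ^ 2 * (a / b) ^ γ * a ^ p * b ^ q * N * (b ^ q / b ^ p) :=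
        le_mul_of_one_le_right (by positivity) ((one_le_div hbp).2 hpq)
    _ = C ^ 2 * (a / b) ^ (γ + p) * b ^ (2 * q) * N := by
        rw [Real.rpow_add (div_pos ha hb), Real.div_rpow ha.le hb.le p, two_mul,
          Real.rpow_add hb]
        field_simp

theorem le_of_lyapunov_chain {a b C N Z v w γ p q : ℝ} (ha : 0 < a) (hb : 0 < b) (hC : 0 < C)
    (hN : 0 ≤ N) (hpq : b ^ p ≤ b ^ q) (hZv : a ^ (-p) * Z / C ≤ v) (hvw : v ≤ (a / b) ^ γ * w)
    (hwN : w ≤ C * b ^ q * N) :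
    Z ≤ C ^ 2 * (a / b) ^ (γ + p) * b ^ (2 * q) * N :=
  calc Z ≤ C * a ^ p * v := le_mul_rpow_mul_of_rpow_neg_mul_div_le ha hC hZv
    _ ≤ C * a ^ p * ((a / b) ^ γ * (C * b ^ q * N)) := by gcongr; exact hvw.trans (by gcongr)
    _ ≤ _ := mul_rpow_mul_div_rpow_le ha hb hN hpq

theorem IsEvolution.apply_apply_swap {n : ℕ} {A : ℝ → Euc n →L[ℝ] Euc n}
    {Ψ : ℝ → ℝ → Euc n →L[ℝ] Euc n} (hΨ : IsEvolution A Ψ) (t s : ℝ) (x : Euc n) :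
    Ψ t s (Ψ s t x) = x := by
  rw [← ContinuousLinearMap.comp_apply, hΨ.2.1, hΨ.1]
  rfl

theorem estimates_from_strict_lyapunov_general
    {n : ℕ}
    (μ : ℝ → ℝ) (hμ : IsGrowthRate μ)
    (A : ℝ → Euc n →L[ℝ] Euc n) (Ψ : ℝ → ℝ → Euc n →L[ℝ] Euc n)
    (hΨ : IsEvolution A Ψ)
    (V : ℝ → Euc n → ℝ) (C ε : ℝ) (hC : 0 < C) (hε : 0 ≤ ε)
    (hVbound : ∀ τ : ℝ, ∀ x : Euc n, |V τ x| ≤ C * μ τ ^ (Real.sign τ * ε) * ‖x‖)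
    (α β : ℝ)
    (Gs Gu : ℝ → Submodule ℝ (Euc n))
    (hGsInv : ∀ t τ : ℝ, (Gs τ).map (Ψ t τ).toLinearMap = Gs t)
    (hGuInv : ∀ t τ : ℝ, (Gu τ).map (Ψ t τ).toLinearMap = Gu t)
    (hVu : ∀ τ : ℝ, ∀ x ∈ Gu τ, 0 ≤ V τ x)
    (hVuGrow : ∀ τ t : ℝ, τ ≤ t → ∀ x ∈ Gu τ,
      (μ τ / μ t) ^ α * V τ x ≤ V t (Ψ t τ x))
    (hVsDecay : ∀ τ t : ℝ, τ ≤ t → ∀ x ∈ Gs τ,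
      |V t (Ψ t τ x)| ≤ (μ t / μ τ) ^ β * |V τ x|)
    (hVlow : ∀ τ : ℝ, ∀ x : Euc n, x ∈ Gs τ ∨ x ∈ Gu τ →
      μ τ ^ (-(Real.sign τ * ε)) * ‖x‖ / C ≤ |V τ x|) :
    ∀ τ t : ℝ, τ ≤ t →
      (∀ x ∈ Gs τ,
        ‖Ψ t τ x‖ ≤
          C ^ 2 * (μ t / μ τ) ^ (β + Real.sign t * ε) *
            μ τ ^ (2 * Real.sign τ * ε) * ‖x‖) ∧
      (∀ y ∈ Gu t,
        ‖Ψ τ t y‖ ≤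
          C ^ 2 * (μ τ / μ t) ^ (-α + Real.sign τ * ε) *
            μ t ^ (2 * Real.sign t * ε) * ‖y‖) := by
  obtain ⟨hmono, hpos, h0, -, -⟩ := hμ
  have hweight (s u : ℝ) : μ s ^ (Real.sign u * ε) ≤ μ s ^ (Real.sign s * ε) :=
    rpow_le_rpow_sign_mul hmono.monotone hpos h0 (Real.abs_sign_mul_le u hε) s
  intro τ t hτt
  have hμt := hpos t
  have hμτ := hpos τ
  refine ⟨fun x hx => ?_, fun y hy => ?_⟩
  · have hz : Ψ t τ x ∈ Gs t := hGsInv t τ ▸ Submodule.mem_map_of_mem hx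
    rw [mul_assoc 2]
    exact le_of_lyapunov_chain hμt hμτ hC (norm_nonneg x) (hweight τ t) (hVlow t _ (.inl hz))
      (hVsDecay τ t hτt x hx) (hVbound τ x)
  · set x := Ψ τ t y
    have hx : x ∈ Gu τ := hGuInv τ t ▸ Submodule.mem_map_of_mem hy
    have hgrow : |V τ x| ≤ (μ τ / μ t) ^ (-α) * V t y := by
      have h := hVuGrow τ t hτt x hx
      rwa [hΨ.apply_apply_swap, ← le_inv_mul_iff₀ (by positivity),
        ← Real.rpow_neg (by positivity), ← abs_of_nonneg (hVu τ x hx)] at h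
    rw [mul_assoc 2]
    exact le_of_lyapunov_chain hμτ hμt hC (norm_nonneg y) (hweight t τ) (hVlow τ x (.inr hx))
      hgrow ((le_abs_self _).trans (hVbound t y))

/-- Proposition: estimates from a strict Lyapunov function on
invariant subspaces `𝒢_τ^s`, `𝒢_τ^u`.  Note that `Ψ τ t = Ψ(t,τ)⁻¹`. -/
theorem estimates_from_strict_lyapunov
    {n : ℕ} (hn : 1 ≤ n)
    (μ : ℝ → ℝ) (hμ : IsGrowthRate μ)
    (A : ℝ → Euc n →L[ℝ] Euc n) (Ψ : ℝ → ℝ → Euc n →L[ℝ] Euc n)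
    (hΨ : IsEvolution A Ψ)
    (V : ℝ → Euc n → ℝ) (C ε : ℝ) (hC : 0 < C) (hε : 0 ≤ ε)
    (hVbound : ∀ τ : ℝ, ∀ x : Euc n, |V τ x| ≤ C * μ τ ^ (Real.sign τ * ε) * ‖x‖)
    (α β : ℝ) (hα : α < 0) (hβ : β < 0)
    (Gs Gu : ℝ → Submodule ℝ (Euc n))
    (hGsInv : ∀ t τ : ℝ, (Gs τ).map (Ψ t τ).toLinearMap = Gs t)
    (hGuInv : ∀ t τ : ℝ, (Gu τ).map (Ψ t τ).toLinearMap = Gu t)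
    (hVs : ∀ τ : ℝ, ∀ x ∈ Gs τ, V τ x ≤ 0)
    (hVu : ∀ τ : ℝ, ∀ x ∈ Gu τ, 0 ≤ V τ x)
    (hVuGrow : ∀ τ t : ℝ, τ ≤ t → ∀ x ∈ Gu τ,
      (μ τ / μ t) ^ α * V τ x ≤ V t (Ψ t τ x))
    (hVsDecay : ∀ τ t : ℝ, τ ≤ t → ∀ x ∈ Gs τ,
      |V t (Ψ t τ x)| ≤ (μ t / μ τ) ^ β * |V τ x|)
    (hVlow : ∀ τ : ℝ, ∀ x : Euc n, x ∈ Gs τ ∨ x ∈ Gu τ →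
      μ τ ^ (-(Real.sign τ * ε)) * ‖x‖ / C ≤ |V τ x|) :
    ∀ τ t : ℝ, τ ≤ t →
      (∀ x ∈ Gs τ,
        ‖Ψ t τ x‖ ≤
          C ^ 2 * (μ t / μ τ) ^ (β + Real.sign t * ε) *
            μ τ ^ (2 * Real.sign τ * ε) * ‖x‖) ∧
      (∀ y ∈ Gu t,
        ‖Ψ τ t y‖ ≤
          C ^ 2 * (μ τ / μ t) ^ (-α + Real.sign τ * ε) *
            μ t ^ (2 * Real.sign t * ε) * ‖y‖) :=
  estimates_from_strict_lyapunov_general μ hμ A Ψ hΨ V C ε hC hε hVbound α β Gs Gu hGsInv hGuInv hVu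
    hVuGrow hVsDecay hVlow
end
end

section
/- Let μ be a differentiable growth rate and let λ_s, λ_u, ν, ω, θ be real numbers with ν ≥ 0, ω ≥ 0, θ ≥ max{ν, ω}, λ_s < ν − θ and λ_u > θ − ω. Then for all τ ≤ t, ∫_τ^t (μ(t)/μ(κ))^{λ_s} μ(κ)^{sign(κ)(ν−θ)−1} μ'(κ) dκ ≤ 1/(−λ_s + ν − θ), and for all t ∈ ℝ, ∫_t^{+∞} (μ(t)/μ(κ))^{λ_u} μ(κ)^{sign(κ)(ω−θ)−1} μ'(κ) dκ ≤ 1/(λ_u − θ + ω). -/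
/-!
Since `μ` is increasing with `μ 0 = 1`, the factor `μ κ ^ (sign κ * c)` is at most `1`
whenever `c ≤ 0`. Both integrands are therefore dominated by `(μ t / μ κ) ^ λ * μ' κ / μ κ`,
the `κ`-derivative of `-(μ t / μ κ) ^ λ / λ`, which integrates to at most `1 / (-λ_s)` over
`(τ, t]` and to exactly `1 / λ_u` over `(t, ∞)`. These are below the claimed bounds because
`ν, ω ≤ θ`.
-/

open MeasureTheory

noncomputable section

lemma rpow_sign_mul_le_one {μ : ℝ → ℝ} (hmono : Monotone μ) (hpos : ∀ t, 0 < μ t)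
    (h0 : μ 0 = 1) {c : ℝ} (hc : c ≤ 0) (κ : ℝ) : μ κ ^ (Real.sign κ * c) ≤ 1 := by
  rcases lt_trichotomy κ 0 with hκ | rfl | hκ
  · rw [Real.sign_of_neg hκ, neg_one_mul]
    exact Real.rpow_le_one (hpos κ).le (h0 ▸ hmono hκ.le) (by linarith)
  · simp [h0]
  · rw [Real.sign_of_pos hκ, one_mul]
    exact Real.rpow_le_one_of_one_le_of_nonpos (h0 ▸ hmono hκ.le) hc

section

variable {f f' : ℝ → ℝ} {lam : ℝ}

lemma hasDerivAt_neg_div_rpow_div {c x : ℝ} (hf : HasDerivAt f (f' x) x) (hc : 0 < c)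
    (hx : 0 < f x) (hlam : lam ≠ 0) :
    HasDerivAt (fun y => -(c / f y) ^ lam / lam) ((c / f x) ^ lam * (f x)⁻¹ * f' x) x := by
  have hq : 0 < c / f x := div_pos hc hx
  have h := (((hasDerivAt_const x c).div hf hx.ne').rpow_const (p := lam) (Or.inl hq.ne')).neg
    |>.div_const lam
  refine h.congr_deriv ?_
  simp only [Pi.div_apply, Real.rpow_sub_one hq.ne']
  field_simp
  ring

lemma div_rpow_mul_inv_mul_nonneg (hpos : ∀ x, 0 < f x) (hf' : ∀ x, 0 ≤ f' x) (t κ : ℝ) :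
    0 ≤ (f t / f κ) ^ lam * (f κ)⁻¹ * f' κ :=
  mul_nonneg (mul_nonneg (Real.rpow_nonneg (div_pos (hpos t) (hpos κ)).le _)
    (inv_nonneg.2 (hpos κ).le)) (hf' κ)

lemma integrableOn_Ioc_div_rpow_mul_inv_mul (hf : ∀ x, HasDerivAt f (f' x) x)
    (hpos : ∀ x, 0 < f x) (hf' : ∀ x, 0 ≤ f' x) (hlam : lam ≠ 0) (τ t : ℝ) :
    IntegrableOn (fun κ => (f t / f κ) ^ lam * (f κ)⁻¹ * f' κ) (Set.Ioc τ t) :=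
  have hderiv := fun x => hasDerivAt_neg_div_rpow_div (hf x) (hpos t) (hpos x) hlam
  intervalIntegral.integrableOn_deriv_of_nonneg
    (fun x _ => (hderiv x).continuousAt.continuousWithinAt) (fun x _ => hderiv x)
    (fun x _ => div_rpow_mul_inv_mul_nonneg hpos hf' t x)

lemma setIntegral_Ioc_div_rpow_mul_inv_mul_le (hf : ∀ x, HasDerivAt f (f' x) x)
    (hpos : ∀ x, 0 < f x) (hf' : ∀ x, 0 ≤ f' x) (hlam : lam < 0) {τ t : ℝ} (hτt : τ ≤ t) :
    ∫ κ in Set.Ioc τ t, (f t / f κ) ^ lam * (f κ)⁻¹ * f' κ ≤ -1 / lam := by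
  have hint := integrableOn_Ioc_div_rpow_mul_inv_mul hf hpos hf' hlam.ne τ t
  have hderiv := fun x => hasDerivAt_neg_div_rpow_div (hf x) (hpos t) (hpos x) hlam.ne
  rw [← intervalIntegral.integral_of_le hτt, intervalIntegral.integral_eq_sub_of_hasDerivAt_of_le
    hτt (fun x _ => (hderiv x).continuousAt.continuousWithinAt) (fun x _ => hderiv x)
    ((intervalIntegrable_iff_integrableOn_Ioc_of_le hτt).2 hint), div_self (hpos t).ne',
    Real.one_rpow, sub_le_self_iff, neg_div, neg_nonneg]
  exact div_nonpos_of_nonneg_of_nonpos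
    (Real.rpow_nonneg (div_pos (hpos t) (hpos τ)).le _) hlam.le

lemma tendsto_neg_div_rpow_div_atTop (htop : Filter.Tendsto f Filter.atTop Filter.atTop)
    (hlam : 0 < lam) (c : ℝ) :
    Filter.Tendsto (fun y => -(c / f y) ^ lam / lam) Filter.atTop (nhds 0) := by
  have := ((Real.continuousAt_rpow_const 0 lam (Or.inr hlam.le)).tendsto.comp
    (htop.const_div_atTop c)).neg.div_const lam
  simpa [Real.zero_rpow hlam.ne'] using this

lemma integrableOn_Ioi_div_rpow_mul_inv_mul (hf : ∀ x, HasDerivAt f (f' x) x)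
    (hpos : ∀ x, 0 < f x) (hf' : ∀ x, 0 ≤ f' x)
    (htop : Filter.Tendsto f Filter.atTop Filter.atTop) (hlam : 0 < lam) (t : ℝ) :
    IntegrableOn (fun κ => (f t / f κ) ^ lam * (f κ)⁻¹ * f' κ) (Set.Ioi t) :=
  integrableOn_Ioi_deriv_of_nonneg'
    (fun x _ => hasDerivAt_neg_div_rpow_div (hf x) (hpos t) (hpos x) hlam.ne')
    (fun x _ => div_rpow_mul_inv_mul_nonneg hpos hf' t x)
    (tendsto_neg_div_rpow_div_atTop htop hlam (f t))

lemma setIntegral_Ioi_div_rpow_mul_inv_mul (hf : ∀ x, HasDerivAt f (f' x) x)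
    (hpos : ∀ x, 0 < f x) (hf' : ∀ x, 0 ≤ f' x)
    (htop : Filter.Tendsto f Filter.atTop Filter.atTop) (hlam : 0 < lam) (t : ℝ) :
    ∫ κ in Set.Ioi t, (f t / f κ) ^ lam * (f κ)⁻¹ * f' κ = 1 / lam := by
  rw [integral_Ioi_of_hasDerivAt_of_nonneg'
    (fun x _ => hasDerivAt_neg_div_rpow_div (hf x) (hpos t) (hpos x) hlam.ne')
    (fun x _ => div_rpow_mul_inv_mul_nonneg hpos hf' t x)
    (tendsto_neg_div_rpow_div_atTop htop hlam (f t)), div_self (hpos t).ne', Real.one_rpow]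
  ring

end

lemma setIntegral_div_rpow_mul_rpow_sign_le {μ μ' : ℝ → ℝ} (hmono : Monotone μ)
    (hpos : ∀ t, 0 < μ t) (h0 : μ 0 = 1) (hμ' : ∀ t, 0 ≤ μ' t) {c : ℝ} (hc : c ≤ 0)
    (lam t : ℝ) {s : Set ℝ}
    (hint : IntegrableOn (fun κ => (μ t / μ κ) ^ lam * (μ κ)⁻¹ * μ' κ) s) :
    ∫ κ in s, (μ t / μ κ) ^ lam * μ κ ^ (Real.sign κ * c - 1) * μ' κ ≤
      ∫ κ in s, (μ t / μ κ) ^ lam * (μ κ)⁻¹ * μ' κ := by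
  refine integral_mono_of_nonneg (ae_of_all _ fun κ => ?_) hint (ae_of_all _ fun κ => ?_)
  · exact mul_nonneg (mul_nonneg (Real.rpow_nonneg (div_pos (hpos t) (hpos κ)).le _)
      (Real.rpow_nonneg (hpos κ).le _)) (hμ' κ)
  · have hle : μ κ ^ (Real.sign κ * c - 1) ≤ (μ κ)⁻¹ := by
      rw [Real.rpow_sub_one (hpos κ).ne', ← one_div]
      exact div_le_div_of_nonneg_right (rpow_sign_mul_le_one hmono hpos h0 hc κ) (hpos κ).le
    exact mul_le_mul_of_nonneg_right
      (mul_le_mul_of_nonneg_left hle (Real.rpow_nonneg (div_pos (hpos t) (hpos κ)).le _)) (hμ' κ)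

theorem growth_rate_integral_estimates_general
    (μ μ' : ℝ → ℝ) (hμ : IsGrowthRate μ) (hμ' : ∀ t, HasDerivAt μ (μ' t) t)
    (lams lamu ν ω θ : ℝ)
    (hθ : max ν ω ≤ θ)
    (hs : lams < ν - θ) (hu : θ - ω < lamu) :
    (∀ τ t : ℝ, τ ≤ t →
      (∫ κ in Set.Ioc τ t,
          (μ t / μ κ) ^ lams * μ κ ^ (Real.sign κ * (ν - θ) - 1) * μ' κ) ≤
        1 / (-lams + ν - θ)) ∧
    (∀ t : ℝ,
      (∫ κ in Set.Ioi t,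
          (μ t / μ κ) ^ lamu * μ κ ^ (Real.sign κ * (ω - θ) - 1) * μ' κ) ≤
        1 / (lamu - θ + ω)) := by
  obtain ⟨hmono, hpos, h0, htop, -⟩ := hμ
  have hμ'_nonneg : ∀ t, 0 ≤ μ' t := fun t => (hμ' t).deriv ▸ hmono.monotone.deriv_nonneg
  obtain ⟨hνθ, hωθ⟩ := max_le_iff.1 hθ
  refine ⟨fun τ t hτt => ?_, fun t => ?_⟩
  · calc _ ≤ ∫ κ in Set.Ioc τ t, (μ t / μ κ) ^ lams * (μ κ)⁻¹ * μ' κ :=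
          setIntegral_div_rpow_mul_rpow_sign_le hmono.monotone hpos h0 hμ'_nonneg
            (by linarith) lams t
            (integrableOn_Ioc_div_rpow_mul_inv_mul hμ' hpos hμ'_nonneg (by linarith) τ t)
      _ ≤ -1 / lams :=
          setIntegral_Ioc_div_rpow_mul_inv_mul_le hμ' hpos hμ'_nonneg (by linarith) hτt
      _ ≤ 1 / (-lams + ν - θ) := by
          rw [neg_div, ← div_neg]
          exact one_div_le_one_div_of_le (by linarith) (by linarith)
  · calc _ ≤ ∫ κ in Set.Ioi t, (μ t / μ κ) ^ lamu * (μ κ)⁻¹ * μ' κ :=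
          setIntegral_div_rpow_mul_rpow_sign_le hmono.monotone hpos h0 hμ'_nonneg
            (by linarith) lamu t
            (integrableOn_Ioi_div_rpow_mul_inv_mul hμ' hpos hμ'_nonneg htop (by linarith) t)
      _ = 1 / lamu :=
          setIntegral_Ioi_div_rpow_mul_inv_mul hμ' hpos hμ'_nonneg htop (by linarith) t
      _ ≤ 1 / (lamu - θ + ω) := one_div_le_one_div_of_le (by linarith) (by linarith)

/-- key integral estimates for a differentiable growth rate. -/
theorem growth_rate_integral_estimates
    (μ μ' : ℝ → ℝ) (hμ : IsGrowthRate μ) (hμ' : ∀ t, HasDerivAt μ (μ' t) t)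
    (lams lamu ν ω θ : ℝ)
    (hν : 0 ≤ ν) (hω : 0 ≤ ω) (hθ : max ν ω ≤ θ)
    (hs : lams < ν - θ) (hu : θ - ω < lamu) :
    (∀ τ t : ℝ, τ ≤ t →
      (∫ κ in Set.Ioc τ t,
          (μ t / μ κ) ^ lams * μ κ ^ (Real.sign κ * (ν - θ) - 1) * μ' κ) ≤
        1 / (-lams + ν - θ)) ∧
    (∀ t : ℝ,
      (∫ κ in Set.Ioi t,
          (μ t / μ κ) ^ lamu * μ κ ^ (Real.sign κ * (ω - θ) - 1) * μ' κ) ≤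
        1 / (lamu - θ + ω)) :=
  growth_rate_integral_estimates_general μ μ' hμ hμ' lams lamu ν ω θ hθ hs hu
end
end
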